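/- arXiv:1802.07741 — 4 statements merged into one kernel-verified Lean document; each statement's English description precedes it below -/
import Mathlib

section
/- Let $\mathcal{F}$, $\mathcal{A}_1$, $\mathcal{A}_2$, $\mathcal{B}_1$, $\mathcal{B}_2$ be sub-$\sigma$-algebras such that $\mathcal{A}_1$ and $\mathcal{A}_2$ are conditionally independent given $\mathcal{F}$, $\mathcal{B}_1$ is independent of $\mathcal{F} \vee \mathcal{A}_1 \vee \mathcal{A}_2 \vee \mathcal{B}_2$, and $\mathcal{B}_2$ is independent of $\mathcal{F} \vee \mathcal{A}_1 \vee \mathcal{A}_2$. Then $\mathcal{A}_1 \vee \mathcal{B}_1$ and $\mathcal{A}_2 \vee \mathcal{B}_2$ are conditionally independent given $\mathcal{F}$. -/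
/-!
Conditional independence of `A` and `B` given `𝓕` amounts to
`P(A ∩ B ∩ F) = ∫_{A ∩ F} P(B | 𝓕)` for all `F ∈ 𝓕`. For fixed `B` both sides are finite
measures in `A`, so by Dynkin's π-λ theorem it suffices to check the factorization on rectangles
`a₁ ∩ b₁` and `a₂ ∩ b₂` generating `𝓐₁ ⊔ 𝓑₁` and `𝓐₂ ⊔ 𝓑₂`. There independence pulls the
constants out, `P(a₁ ∩ b₁ ∩ a₂ ∩ b₂ | 𝓕) = P(b₁) P(b₂) P(a₁ ∩ a₂ | 𝓕)`, and the conditional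
independence of `𝓐₁` and `𝓐₂` finishes.
-/

open MeasureTheory ProbabilityTheory Set

/-- Conditional independence of two sub-σ-algebras `m₁`, `m₂` given `𝓕`, with respect to a
probability measure on `(Ω, m0)`: `P(A ∩ B | 𝓕) = P(A | 𝓕) P(B | 𝓕)` a.s. for all
`A ∈ m₁`, `B ∈ m₂`. -/
def CondIndepGiven {Ω : Type*} (m0 : MeasurableSpace Ω) (P : @MeasureTheory.Measure Ω m0)
    (𝓕 m₁ m₂ : MeasurableSpace Ω) : Prop :=
  ∀ A, MeasurableSet[m₁] A → ∀ B, MeasurableSet[m₂] B →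
    (@MeasureTheory.condExp Ω ℝ 𝓕 m0 _ _ P (Set.indicator (A ∩ B) fun _ => (1 : ℝ)))
      =ᵐ[P] fun ω => (@MeasureTheory.condExp Ω ℝ 𝓕 m0 _ _ P (Set.indicator A fun _ => (1 : ℝ))) ω
        * (@MeasureTheory.condExp Ω ℝ 𝓕 m0 _ _ P (Set.indicator B fun _ => (1 : ℝ))) ω

lemma IsPiSystem.image2_inter {Ω : Type*} {S T : Set (Set Ω)} (hS : IsPiSystem S)
    (hT : IsPiSystem T) : IsPiSystem (image2 (· ∩ ·) S T) := by
  rintro _ ⟨s, hs, t, ht, rfl⟩ _ ⟨s', hs', t', ht', rfl⟩ hne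
  rw [inter_inter_inter_comm] at hne ⊢
  exact mem_image2_of_mem (hS s hs s' hs' hne.left) (hT t ht t' ht' hne.right)

lemma MeasurableSpace.sup_eq_generateFrom_image2_inter {Ω : Type*} (m₁ m₂ : MeasurableSpace Ω) :
    m₁ ⊔ m₂ = generateFrom (image2 (· ∩ ·) {s | MeasurableSet[m₁] s} {t | MeasurableSet[m₂] t}) :=
  le_antisymm
    (sup_le (fun s hs => measurableSet_generateFrom ⟨s, hs, univ, .univ, inter_univ s⟩)
      (fun t ht => measurableSet_generateFrom ⟨univ, .univ, t, ht, univ_inter t⟩))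
    (generateFrom_le <| by
      rintro _ ⟨s, hs, t, ht, rfl⟩
      exact (le_sup_left (b := m₂) s hs).inter (le_sup_right (a := m₁) t ht))

section

variable {Ω : Type*} {𝓕 m m0 : MeasurableSpace Ω} {P : Measure Ω}

lemma ae_norm_condExp_indicator_le_one (A : Set Ω) : ∀ᵐ ω ∂P, ‖(P⟦A | 𝓕⟧) ω‖ ≤ 1 :=
  ae_bdd_norm_condExp_of_ae_bdd_norm <| .of_forall fun ω =>
    (norm_indicator_le_norm_self _ ω).trans norm_one.le

lemma setIntegral_indicator_one {A F : Set Ω} (hA : MeasurableSet A) :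
    ∫ ω in F, A.indicator (fun _ => (1 : ℝ)) ω ∂P = P.real (A ∩ F) :=
  (integral_indicator_one hA).trans (measureReal_restrict_apply hA)

lemma condExp_indicator_nonneg {A : Set Ω} : 0 ≤ᵐ[P] P⟦A | 𝓕⟧ :=
  condExp_nonneg (.of_forall fun ω => indicator_nonneg (fun _ _ => zero_le_one) ω)

lemma withDensity_ofReal_condExp_indicator_apply (B F : Set Ω) {s : Set Ω} (hs : MeasurableSet s) :
    (P.restrict F).withDensity (fun ω => ENNReal.ofReal ((P⟦B | 𝓕⟧) ω)) s
      = ENNReal.ofReal (∫ ω in s ∩ F, (P⟦B | 𝓕⟧) ω ∂P) := by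
  rw [withDensity_apply _ hs, Measure.restrict_restrict hs, ofReal_integral_eq_lintegral_ofReal
    integrable_condExp.integrableOn (ae_restrict_of_ae condExp_indicator_nonneg)]

variable [IsFiniteMeasure P]

lemma setIntegral_condExp_indicator (h𝓕 : 𝓕 ≤ m0) {A F : Set Ω} (hA : MeasurableSet A)
    (hF : MeasurableSet[𝓕] F) : ∫ ω in F, (P⟦A | 𝓕⟧) ω ∂P = P.real (A ∩ F) := by
  rw [setIntegral_condExp h𝓕 ((integrable_const 1).indicator hA) hF,
    setIntegral_indicator_one hA]

lemma setIntegral_condExp_indicator_mul (h𝓕 : 𝓕 ≤ m0) {A F : Set Ω} {g : Ω → ℝ} {C : ℝ}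
    (hA : MeasurableSet A) (hF : MeasurableSet[𝓕] F) (hg : StronglyMeasurable[𝓕] g)
    (hgC : ∀ᵐ ω ∂P, ‖g ω‖ ≤ C) :
    ∫ ω in F, (P⟦A | 𝓕⟧) ω * g ω ∂P = ∫ ω in A ∩ F, g ω ∂P := by
  have hA1 : Integrable (A.indicator fun _ => (1 : ℝ)) P := (integrable_const 1).indicator hA
  have hpull := condExp_stronglyMeasurable_mul_of_bound h𝓕 hg hA1 C hgC
  calc ∫ ω in F, (P⟦A | 𝓕⟧) ω * g ω ∂P
      = ∫ ω in F, P[g * A.indicator (fun _ => 1) | 𝓕] ω ∂P := by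
        refine setIntegral_congr_ae₀ (h𝓕 F hF).nullMeasurableSet ?_
        filter_upwards [hpull] with ω hω _
        rw [hω, Pi.mul_apply, mul_comm]
    _ = ∫ ω in F, g ω * A.indicator (fun _ => 1) ω ∂P :=
        setIntegral_condExp h𝓕 (hA1.bdd_mul (hg.mono h𝓕).aestronglyMeasurable hgC) hF
    _ = ∫ ω in A ∩ F, g ω ∂P := by
        rw [inter_comm, ← setIntegral_indicator hA]
        congr 1 with ω
        by_cases hω : ω ∈ A <;> simp [hω]

lemma condExp_indicator_inter_eq_mul_iff (h𝓕 : 𝓕 ≤ m0) {A B : Set Ω} (hA : MeasurableSet A)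
    (hB : MeasurableSet B) :
    P⟦A ∩ B | 𝓕⟧ =ᵐ[P] P⟦A | 𝓕⟧ * P⟦B | 𝓕⟧ ↔
      ∀ F, MeasurableSet[𝓕] F → P.real (A ∩ B ∩ F) = ∫ ω in A ∩ F, (P⟦B | 𝓕⟧) ω ∂P := by
  have hprod : ∀ F, MeasurableSet[𝓕] F →
      ∫ ω in F, (P⟦A | 𝓕⟧) ω * (P⟦B | 𝓕⟧) ω ∂P = ∫ ω in A ∩ F, (P⟦B | 𝓕⟧) ω ∂P := fun F hF =>
    setIntegral_condExp_indicator_mul h𝓕 hA hF stronglyMeasurable_condExp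
      (ae_norm_condExp_indicator_le_one B)
  constructor
  · intro h F hF
    rw [← setIntegral_condExp_indicator h𝓕 (hA.inter hB) hF, ← hprod F hF]
    exact setIntegral_congr_ae₀ (h𝓕 F hF).nullMeasurableSet (h.mono fun ω hω _ => hω)
  · intro h
    have hint : Integrable (fun ω => (P⟦A | 𝓕⟧) ω * (P⟦B | 𝓕⟧) ω) P := integrable_condExp.bdd_mul
      (stronglyMeasurable_condExp.mono h𝓕).aestronglyMeasurable (ae_norm_condExp_indicator_le_one A)
    refine (ae_eq_condExp_of_forall_setIntegral_eq h𝓕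
      ((integrable_const 1).indicator (hA.inter hB)) (fun F _ _ => hint.integrableOn)
      (fun F hF _ => ?_)
      (stronglyMeasurable_condExp.mul stronglyMeasurable_condExp).aestronglyMeasurable).symm
    rw [hprod F hF, ← h F hF, setIntegral_indicator_one (hA.inter hB)]

lemma condExp_indicator_inter_eq_mul_of_isPiSystem (h𝓕 : 𝓕 ≤ m0) (hm : m ≤ m0)
    {C : Set (Set Ω)} (hgen : m = MeasurableSpace.generateFrom C) (hC : IsPiSystem C)
    {B : Set Ω} (hB : MeasurableSet B)
    (hCB : ∀ s ∈ C, P⟦s ∩ B | 𝓕⟧ =ᵐ[P] P⟦s | 𝓕⟧ * P⟦B | 𝓕⟧) {A : Set Ω} (hA : MeasurableSet[m] A) :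
    P⟦A ∩ B | 𝓕⟧ =ᵐ[P] P⟦A | 𝓕⟧ * P⟦B | 𝓕⟧ := by
  have hCm : ∀ s ∈ C, MeasurableSet s := fun s hs =>
    hm s (hgen ▸ MeasurableSpace.measurableSet_generateFrom hs)
  refine (condExp_indicator_inter_eq_mul_iff h𝓕 (hm A hA) hB).2 fun F hF => ?_
  -- both sides are finite measures of `A`, which agree on `C` and on `univ`
  have hμ : ∀ s, MeasurableSet s → P.restrict (B ∩ F) s = ENNReal.ofReal (P.real (s ∩ B ∩ F)) :=
    fun s hs => by rw [Measure.restrict_apply hs, ofReal_measureReal, inter_assoc]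
  have hAν := ext_on_measurableSpace_of_generate_finite m0 C (μ := P.restrict (B ∩ F))
    (ν := (P.restrict F).withDensity fun ω => ENNReal.ofReal ((P⟦B | 𝓕⟧) ω))
    (fun s hs => by
      rw [hμ s (hCm s hs), withDensity_ofReal_condExp_indicator_apply B F (hCm s hs),
        (condExp_indicator_inter_eq_mul_iff h𝓕 (hCm s hs) hB).1 (hCB s hs) F hF])
    hm hgen hC (by
      rw [hμ univ .univ, withDensity_ofReal_condExp_indicator_apply B F .univ, univ_inter,
        univ_inter, setIntegral_condExp_indicator h𝓕 hB hF]) hA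
  rw [hμ A (hm A hA), withDensity_ofReal_condExp_indicator_apply B F (hm A hA)] at hAν
  exact (ENNReal.ofReal_eq_ofReal_iff measureReal_nonneg
    (integral_nonneg_of_ae (ae_restrict_of_ae condExp_indicator_nonneg))).1 hAν

lemma condIndepGiven_of_isPiSystem (h𝓕 : 𝓕 ≤ m0) {m₁ m₂ : MeasurableSpace Ω} (hm₁ : m₁ ≤ m0)
    (hm₂ : m₂ ≤ m0) {C₁ C₂ : Set (Set Ω)} (hgen₁ : m₁ = MeasurableSpace.generateFrom C₁)
    (hC₁ : IsPiSystem C₁) (hgen₂ : m₂ = MeasurableSpace.generateFrom C₂) (hC₂ : IsPiSystem C₂)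
    (h : ∀ s ∈ C₁, ∀ t ∈ C₂, P⟦s ∩ t | 𝓕⟧ =ᵐ[P] P⟦s | 𝓕⟧ * P⟦t | 𝓕⟧) :
    CondIndepGiven m0 P 𝓕 m₁ m₂ := by
  have hleft : ∀ A, MeasurableSet[m₁] A → ∀ t ∈ C₂,
      P⟦t ∩ A | 𝓕⟧ =ᵐ[P] P⟦t | 𝓕⟧ * P⟦A | 𝓕⟧ := fun A hA t ht => by
    have htm : MeasurableSet[m0] t := hm₂ t (hgen₂ ▸ MeasurableSpace.measurableSet_generateFrom ht)
    rw [inter_comm, mul_comm]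
    exact condExp_indicator_inter_eq_mul_of_isPiSystem h𝓕 hm₁ hgen₁ hC₁ htm
      (fun s hs => h s hs t ht) hA
  intro A hA B hB
  have hBA := condExp_indicator_inter_eq_mul_of_isPiSystem h𝓕 hm₂ hgen₂ hC₂ (hm₁ A hA)
    (hleft A hA) hB
  rw [inter_comm, mul_comm] at hBA
  exact hBA

lemma condExp_indicator_inter_of_indep (h𝓕 : 𝓕 ≤ m0) {𝓑 𝓜 : MeasurableSpace Ω} (h𝓑 : 𝓑 ≤ m0)
    (h𝓜 : 𝓜 ≤ m0) (h𝓕𝓜 : 𝓕 ≤ 𝓜) (hind : Indep 𝓑 𝓜 P) {S B : Set Ω} (hS : MeasurableSet[𝓜] S)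
    (hB : MeasurableSet[𝓑] B) :
    P⟦S ∩ B | 𝓕⟧ =ᵐ[P] fun ω => P.real B * (P⟦S | 𝓕⟧) ω := by
  have hSB : MeasurableSet[m0] (S ∩ B) := (h𝓜 S hS).inter (h𝓑 B hB)
  refine (ae_eq_condExp_of_forall_setIntegral_eq h𝓕 ((integrable_const 1).indicator hSB)
    (fun F _ _ => (integrable_condExp.const_mul _).integrableOn) (fun F hF _ => ?_)
    (stronglyMeasurable_condExp.const_mul _).aestronglyMeasurable).symm
  rw [integral_const_mul, setIntegral_condExp_indicator h𝓕 (h𝓜 S hS) hF,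
    setIntegral_indicator_one hSB, measureReal_def, measureReal_def,
    measureReal_def, ← ENNReal.toReal_mul,
    ← (Indep_iff 𝓑 𝓜 P).1 hind B (S ∩ F) hB (hS.inter (h𝓕𝓜 F hF)), inter_left_comm, inter_assoc]

lemma condIndepGiven_sup_of_forall_inter (h𝓕 : 𝓕 ≤ m0) {𝓐₁ 𝓐₂ 𝓑₁ 𝓑₂ : MeasurableSpace Ω}
    (h𝓐₁ : 𝓐₁ ≤ m0) (h𝓐₂ : 𝓐₂ ≤ m0) (h𝓑₁ : 𝓑₁ ≤ m0) (h𝓑₂ : 𝓑₂ ≤ m0)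
    (h : ∀ a₁ b₁ a₂ b₂, MeasurableSet[𝓐₁] a₁ → MeasurableSet[𝓑₁] b₁ → MeasurableSet[𝓐₂] a₂ →
      MeasurableSet[𝓑₂] b₂ → P⟦a₁ ∩ b₁ ∩ (a₂ ∩ b₂) | 𝓕⟧ =ᵐ[P] P⟦a₁ ∩ b₁ | 𝓕⟧ * P⟦a₂ ∩ b₂ | 𝓕⟧) :
    CondIndepGiven m0 P 𝓕 (𝓐₁ ⊔ 𝓑₁) (𝓐₂ ⊔ 𝓑₂) := by
  refine condIndepGiven_of_isPiSystem h𝓕 (sup_le h𝓐₁ h𝓑₁) (sup_le h𝓐₂ h𝓑₂)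
    (MeasurableSpace.sup_eq_generateFrom_image2_inter 𝓐₁ 𝓑₁)
    ((@MeasurableSpace.isPiSystem_measurableSet _ 𝓐₁).image2_inter
      (@MeasurableSpace.isPiSystem_measurableSet _ 𝓑₁))
    (MeasurableSpace.sup_eq_generateFrom_image2_inter 𝓐₂ 𝓑₂)
    ((@MeasurableSpace.isPiSystem_measurableSet _ 𝓐₂).image2_inter
      (@MeasurableSpace.isPiSystem_measurableSet _ 𝓑₂)) ?_
  rintro _ ⟨a₁, ha₁, b₁, hb₁, rfl⟩ _ ⟨a₂, ha₂, b₂, hb₂, rfl⟩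
  exact h a₁ b₁ a₂ b₂ ha₁ hb₁ ha₂ hb₂

end

/-- if `𝓐₁ ⊥ 𝓐₂ | 𝓕`, `𝓑₁` is independent of `𝓕 ∨ 𝓐₁ ∨ 𝓐₂ ∨ 𝓑₂`, and
`𝓑₂` is independent of `𝓕 ∨ 𝓐₁ ∨ 𝓐₂`, then `𝓐₁ ∨ 𝓑₁ ⊥ 𝓐₂ ∨ 𝓑₂ | 𝓕`. -/
theorem condIndep_sup_of_condIndep_of_indep
    {Ω : Type*} (m0 : MeasurableSpace Ω) (P : @MeasureTheory.Measure Ω m0)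
    [@IsProbabilityMeasure Ω m0 P]
    (𝓕 𝓐₁ 𝓐₂ 𝓑₁ 𝓑₂ : MeasurableSpace Ω)
    (h𝓕 : 𝓕 ≤ m0) (h𝓐₁ : 𝓐₁ ≤ m0) (h𝓐₂ : 𝓐₂ ≤ m0) (h𝓑₁ : 𝓑₁ ≤ m0) (h𝓑₂ : 𝓑₂ ≤ m0)
    (hA : CondIndepGiven m0 P 𝓕 𝓐₁ 𝓐₂)
    (hB₁ : @ProbabilityTheory.Indep Ω 𝓑₁ (𝓕 ⊔ 𝓐₁ ⊔ 𝓐₂ ⊔ 𝓑₂) m0 P)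
    (hB₂ : @ProbabilityTheory.Indep Ω 𝓑₂ (𝓕 ⊔ 𝓐₁ ⊔ 𝓐₂) m0 P) :
    CondIndepGiven m0 P 𝓕 (𝓐₁ ⊔ 𝓑₁) (𝓐₂ ⊔ 𝓑₂) := by
  have hM₂ : 𝓕 ⊔ 𝓐₁ ⊔ 𝓐₂ ≤ m0 := sup_le (sup_le h𝓕 h𝓐₁) h𝓐₂
  have hM₁ : 𝓕 ⊔ 𝓐₁ ⊔ 𝓐₂ ⊔ 𝓑₂ ≤ m0 := sup_le hM₂ h𝓑₂
  have h𝓕M₂ : 𝓕 ≤ 𝓕 ⊔ 𝓐₁ ⊔ 𝓐₂ := le_sup_of_le_left le_sup_left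
  have hM₂M₁ : 𝓕 ⊔ 𝓐₁ ⊔ 𝓐₂ ≤ 𝓕 ⊔ 𝓐₁ ⊔ 𝓐₂ ⊔ 𝓑₂ := le_sup_left
  refine condIndepGiven_sup_of_forall_inter h𝓕 h𝓐₁ h𝓐₂ h𝓑₁ h𝓑₂
    fun a₁ b₁ a₂ b₂ ha₁ hb₁ ha₂ hb₂ => ?_
  have ha₁' : MeasurableSet[𝓕 ⊔ 𝓐₁ ⊔ 𝓐₂] a₁ := (le_sup_of_le_left le_sup_right : 𝓐₁ ≤ _) a₁ ha₁
  have ha₂' : MeasurableSet[𝓕 ⊔ 𝓐₁ ⊔ 𝓐₂] a₂ := (le_sup_right : 𝓐₂ ≤ _) a₂ ha₂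
  have hb₂' : MeasurableSet[𝓕 ⊔ 𝓐₁ ⊔ 𝓐₂ ⊔ 𝓑₂] b₂ := (le_sup_right : 𝓑₂ ≤ _) b₂ hb₂
  have e₁ := condExp_indicator_inter_of_indep h𝓕 h𝓑₁ hM₁ (h𝓕M₂.trans hM₂M₁) hB₁
    ((hM₂M₁ _ (ha₁'.inter ha₂')).inter hb₂') hb₁
  have e₂ := condExp_indicator_inter_of_indep h𝓕 h𝓑₂ hM₂ h𝓕M₂ hB₂ (ha₁'.inter ha₂') hb₂
  have e₃ := condExp_indicator_inter_of_indep h𝓕 h𝓑₁ hM₁ (h𝓕M₂.trans hM₂M₁) hB₁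
    (hM₂M₁ _ ha₁') hb₁
  have e₄ := condExp_indicator_inter_of_indep h𝓕 h𝓑₂ hM₂ h𝓕M₂ hB₂ ha₂' hb₂
  rw [show a₁ ∩ b₁ ∩ (a₂ ∩ b₂) = a₁ ∩ a₂ ∩ b₂ ∩ b₁ by ext; simp only [mem_inter_iff]; tauto]
  filter_upwards [e₁, e₂, e₃, e₄, hA a₁ ha₁ a₂ ha₂] with ω h₁ h₂ h₃ h₄ hA₁₂
  rw [h₁, h₂, hA₁₂, Pi.mul_apply, h₃, h₄]
  ring
end

section
/- Let $\tau$ be a random time, $(\mathcal{H}_t)$ the filtration generated by $(\mathbf{1}_{\{\tau \le s\}})_{s \le t}$, $\mathcal{A} \subseteq \mathcal{G}$ an arbitrary sub-$\sigma$-algebra, and $Y$ an integrable random variable. Then a.s. $E[\mathbf{1}_{\{\tau \le t\}} Y \mid \mathcal{H}_t \vee \mathcal{A}] = E[\mathbf{1}_{\{\tau \le t\}} Y \mid \sigma(\tau) \vee \mathcal{A}]$. -/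
open MeasureTheory ProbabilityTheory Set

/-!
On `S = {τ ≤ t}` the two σ-algebras `ℋ_t ∨ 𝓐 ⊆ σ(τ) ∨ 𝓐` have the same trace: every
`A ∈ σ(τ) ∨ 𝓐` satisfies `A ∩ S ∈ ℋ_t ∨ 𝓐`, as one checks on the generators
`{τ ≤ b}` (where `{τ ≤ b} ∩ S = {τ ≤ min b t}`) and on `𝓐`. Conditional expectations with
respect to σ-algebras that agree on `S` agree on `S`, and both sides vanish off `S`.
-/
namespace MeasureTheory

variable {Ω : Type*}

theorem measurableSet_inter_of_measurableSet_generateFrom {m : MeasurableSpace Ω}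
    {C : Set (Set Ω)} {S : Set Ω} (hS : MeasurableSet[m] S)
    (hC : ∀ A ∈ C, MeasurableSet[m] (A ∩ S)) {A : Set Ω}
    (hA : MeasurableSet[MeasurableSpace.generateFrom C] A) : MeasurableSet[m] (A ∩ S) := by
  induction A, hA using MeasurableSpace.generateFrom_induction with
  | hC A hA => exact hC A hA
  | empty => simp
  | compl A _ h =>
    rw [← sdiff_eq_compl_inter, ← sdiff_inter_self_eq_sdiff]
    exact hS.diff h
  | iUnion f _ h =>
    rw [iUnion_inter]
    exact .iUnion h

theorem condExp_indicator_ae_eq_of_inter_measurableSet {m₁ m₂ m0 : MeasurableSpace Ω}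
    {μ : Measure Ω} (hm₁ : m₁ ≤ m0) (hm₂ : m₂ ≤ m0) [SigmaFinite (μ.trim hm₁)]
    [SigmaFinite (μ.trim hm₂)] (hm₁₂ : m₁ ≤ m₂) {S : Set Ω} (hS : MeasurableSet[m₁] S)
    (htrace : ∀ A, MeasurableSet[m₂] A → MeasurableSet[m₁] (A ∩ S))
    {f : Ω → ℝ} (hf : Integrable f μ) :
    μ[S.indicator f | m₁] =ᵐ[μ] μ[S.indicator f | m₂] := by
  have heq_on : μ[f | m₁] =ᵐ[μ.restrict S] μ[f | m₂] := by
    refine condExp_ae_eq_restrict_of_measurableSpace_eq_on hm₁ hm₂ hS fun A => ⟨(hm₁₂ _ ·), ?_⟩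
    intro hA
    simpa only [inter_right_comm, inter_self] using htrace _ hA
  calc μ[S.indicator f | m₁] =ᵐ[μ] S.indicator (μ[f | m₁]) := condExp_indicator hf hS
    _ =ᵐ[μ] S.indicator (μ[f | m₂]) := (ae_eq_restrict_iff_indicator_ae_eq (hm₁ _ hS)).1 heq_on
    _ =ᵐ[μ] μ[S.indicator f | m₂] := (condExp_indicator hf (hm₁₂ _ hS)).symm

end MeasureTheory

namespace ProbabilityTheory

variable {Ω : Type*}

/-- The σ-algebra `ℋ_t` of the paper. -/
noncomputable abbrev jumpHistory (τ : Ω → ℝ) (t : ℝ) : MeasurableSpace Ω :=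
  ⨆ (s : ℝ) (_ : s ≤ t),
    MeasurableSpace.comap (Set.indicator {ω' | τ ω' ≤ s} fun _ => (1 : ℝ)) inferInstance

theorem jumpHistory_le_comap (τ : Ω → ℝ) (t : ℝ) :
    jumpHistory τ t ≤ MeasurableSpace.comap τ inferInstance := by
  refine iSup₂_le fun s _ => Measurable.comap_le ?_
  exact measurable_const.indicator (measurableSet_le (comap_measurable τ) measurable_const)

theorem measurableSet_jumpHistory {τ : Ω → ℝ} {s t : ℝ} (hs : s ≤ t) :
    MeasurableSet[jumpHistory τ t] {ω | τ ω ≤ s} := by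
  refine le_iSup₂ (f := fun s _ => MeasurableSpace.comap _ _) s hs _
    ⟨{1}, measurableSet_singleton 1, ?_⟩
  ext ω
  by_cases h : τ ω ≤ s <;> simp [h]

theorem measurableSet_inter_jumpHistory_sup {τ : Ω → ℝ} {t : ℝ} {𝓐 : MeasurableSpace Ω}
    {A : Set Ω} (hA : MeasurableSet[MeasurableSpace.comap τ inferInstance ⊔ 𝓐] A) :
    MeasurableSet[jumpHistory τ t ⊔ 𝓐] (A ∩ {ω | τ ω ≤ t}) := by
  rw [BorelSpace.measurable_eq (α := ℝ), borel_eq_generateFrom_Iic,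
    MeasurableSpace.comap_generateFrom, ← @MeasurableSpace.generateFrom_measurableSet _ 𝓐,
    MeasurableSpace.generateFrom_sup_generateFrom] at hA
  have hS : MeasurableSet[jumpHistory τ t ⊔ 𝓐] {ω | τ ω ≤ t} :=
    le_sup_left (a := jumpHistory τ t) _ (measurableSet_jumpHistory le_rfl)
  refine measurableSet_inter_of_measurableSet_generateFrom hS ?_ hA
  rintro _ (⟨_, ⟨b, rfl⟩, rfl⟩ | hB)
  · have : τ ⁻¹' Iic b ∩ {ω | τ ω ≤ t} = {ω | τ ω ≤ min b t} := by
      ext ω; simp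
    rw [this]
    exact le_sup_left (a := jumpHistory τ t) _ (measurableSet_jumpHistory (min_le_right b t))
  · exact (le_sup_right (a := jumpHistory τ t) _ hB).inter hS

end ProbabilityTheory

/-- on `{τ ≤ t}`, conditioning on the partial observation `ℋ_t ∨ 𝓐` of the
random time `τ` is the same as conditioning on full knowledge `σ(τ) ∨ 𝓐`:
`E[1_{τ≤t} Y | ℋ_t ∨ 𝓐] = E[1_{τ≤t} Y | σ(τ) ∨ 𝓐]` a.s. -/
theorem condexp_after_jump_partial_eq_full
    {Ω : Type*} {m0 : MeasurableSpace Ω} (P : Measure Ω) [IsProbabilityMeasure P]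
    (τ : Ω → ℝ) (hτ : Measurable τ)
    (𝓐 : MeasurableSpace Ω) (h𝓐 : 𝓐 ≤ m0)
    (t : ℝ) (Y : Ω → ℝ) (hYint : Integrable Y P) :
    (P[(fun ω => Set.indicator {ω' | τ ω' ≤ t} (fun _ => (1 : ℝ)) ω * Y ω) |
        (⨆ (s : ℝ) (_ : s ≤ t),
          MeasurableSpace.comap (Set.indicator {ω' | τ ω' ≤ s} fun _ => (1 : ℝ)) inferInstance) ⊔ 𝓐])
      =ᵐ[P]
    (P[(fun ω => Set.indicator {ω' | τ ω' ≤ t} (fun _ => (1 : ℝ)) ω * Y ω) |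
        MeasurableSpace.comap τ inferInstance ⊔ 𝓐]) := by
  have hfun : (fun ω => Set.indicator {ω' | τ ω' ≤ t} (fun _ => (1 : ℝ)) ω * Y ω)
      = {ω | τ ω ≤ t}.indicator Y := by
    ext ω
    by_cases h : τ ω ≤ t <;> simp [h]
  have hle : jumpHistory τ t ⊔ 𝓐 ≤ MeasurableSpace.comap τ inferInstance ⊔ 𝓐 :=
    sup_le_sup_right (jumpHistory_le_comap τ t) 𝓐
  have hfull : MeasurableSpace.comap τ inferInstance ⊔ 𝓐 ≤ m0 := sup_le hτ.comap_le h𝓐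
  have hS : MeasurableSet[jumpHistory τ t ⊔ 𝓐] {ω | τ ω ≤ t} :=
    le_sup_left (a := jumpHistory τ t) _ (measurableSet_jumpHistory le_rfl)
  rw [hfun]
  exact condExp_indicator_ae_eq_of_inter_measurableSet (hle.trans hfull) hfull hle hS
    (fun _ => measurableSet_inter_jumpHistory_sup) hYint
end

section
/- Let $\tilde m : \mathbb{R} \to \mathbb{R}_+$ be nondecreasing, right-continuous, with $\tilde m(u) = 0$ for $u < 0$, left-continuous as a function of the shift in the sense that for each $u$, $s \mapsto \tilde m(u - s)$ is left-continuous in $s$. Let $Z$ be a bounded continuous function on $[t,T]$. Then the map $s \mapsto \int_t^T Z(u) \, d_u \tilde m(u - s)$ (Lebesgue–Stieltjes integral in $u$) is left-continuous and bounded on $[0,T]$. -/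
/-!
Pushing `ms.measure` forward by `x ↦ x + s'` turns the integral into
`∫ x, g (x + s') d(ms.measure)` with `g = 1_{(t,T]} Z`. Since `(t,T]` is open on the left and
closed on the right, `g` is left-continuous at every point, so `x + s' ↑ x + s` gives pointwise
convergence as `s' ↑ s`, and dominated convergence applies with the bound `M` on a compact window.
-/

open MeasureTheory Set Filter Topology

theorem continuousWithinAt_Iio_indicator_Ioc {E : Type*} [TopologicalSpace E] [Zero E]
    {f : ℝ → E} {a b : ℝ} (hf : ContinuousOn f (Icc a b)) (y : ℝ) :
    ContinuousWithinAt ((Ioc a b).indicator f) (Iio y) y := by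
  by_cases hy : y ∈ Ioc a b
  · have hfy : ContinuousWithinAt f (Iio y) y :=
      (continuousWithinAt_Ioo_iff_Iio hy.1).1 ((hf y (Ioc_subset_Icc_self hy)).mono
        (Ioo_subset_Icc_self.trans (Icc_subset_Icc_right hy.2)))
    refine hfy.congr_of_eventuallyEq ?_ (indicator_of_mem hy f)
    filter_upwards [Ioo_mem_nhdsLT hy.1] with z hz
    exact indicator_of_mem (show z ∈ Ioc a b from ⟨hz.1, hz.2.le.trans hy.2⟩) f
  · refine (continuousWithinAt_const (b := (0 : E))).congr_of_eventuallyEq ?_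
      (indicator_of_notMem hy f)
    rcases le_or_gt y a with hya | hay
    · filter_upwards [self_mem_nhdsWithin] with z hz
      exact indicator_of_notMem (fun h => (h.1.trans hz).not_ge hya) f
    · have hby : b < y := by by_contra! h; exact hy ⟨hay, h⟩
      filter_upwards [Ioo_mem_nhdsLT hby] with z hz
      exact indicator_of_notMem (fun h => h.2.not_gt hz.1) f

theorem continuousWithinAt_Iio_integral_comp_add_right {E : Type*} [NormedAddCommGroup E]
    [NormedSpace ℝ E] {μ : Measure ℝ} [IsLocallyFiniteMeasure μ] {g : ℝ → E} {a b C : ℝ}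
    (hg : StronglyMeasurable g) (hgC : ∀ x, ‖g x‖ ≤ C) (hg0 : ∀ x ∉ Icc a b, g x = 0)
    (hlc : ∀ y, ContinuousWithinAt g (Iio y) y) (s : ℝ) :
    ContinuousWithinAt (fun s' => ∫ x, g (x + s') ∂μ) (Iio s) s := by
  refine continuousWithinAt_of_dominated
    (bound := (Icc (a - s) (b - s + 1)).indicator fun _ => C) ?_ ?_ ?_ ?_
  · exact Eventually.of_forall fun s' =>
      (hg.comp_measurable (measurable_add_const s')).aestronglyMeasurable
  · filter_upwards [Ioo_mem_nhdsLT (show s - 1 < s by linarith)] with s' hs'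
    refine Eventually.of_forall fun x => ?_
    by_cases hx : x ∈ Icc (a - s) (b - s + 1)
    · simpa only [indicator_of_mem hx] using hgC (x + s')
    · have hxs' : x + s' ∉ Icc a b := fun h =>
        hx ⟨by linarith [h.1, hs'.2], by linarith [h.2, hs'.1]⟩
      simp only [indicator_of_notMem hx, hg0 _ hxs', norm_zero, le_refl]
  · exact (integrable_indicator_iff measurableSet_Icc).2
      (integrableOn_const measure_Icc_lt_top.ne)
  · refine Eventually.of_forall fun x => (hlc (x + s)).comp
      (continuous_const.add continuous_id).continuousWithinAt fun s' hs' => ?_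
    simpa using (mem_Iio.1 hs')

theorem StieltjesFunction.measure_map_add_const_Ioc (f : StieltjesFunction ℝ) (s a b : ℝ) :
    f.measure.map (· + s) (Ioc a b) = ENNReal.ofReal (f (b - s) - f (a - s)) := by
  rw [Measure.map_apply (measurable_add_const s) measurableSet_Ioc, preimage_add_const_Ioc,
    f.measure_Ioc]

theorem StieltjesFunction.abs_setIntegral_map_add_const_Ioc_le (f : StieltjesFunction ℝ)
    {Z : ℝ → ℝ} {M t T : ℝ} (htT : t ≤ T) (hZ : ∀ u ∈ Ioc t T, |Z u| ≤ M) (s : ℝ) :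
    |∫ u in Ioc t T, Z u ∂(f.measure.map (· + s))| ≤ M * (f (T - s) - f (t - s)) := by
  have hmap := f.measure_map_add_const_Ioc s t T
  calc |∫ u in Ioc t T, Z u ∂(f.measure.map (· + s))|
      ≤ M * (f.measure.map (· + s)).real (Ioc t T) :=
        norm_setIntegral_le_of_norm_le_const (f := Z) (hmap ▸ ENNReal.ofReal_lt_top) hZ
    _ = M * (f (T - s) - f (t - s)) := by
        rw [measureReal_def, hmap, ENNReal.toReal_ofReal (sub_nonneg.2 (f.mono (by linarith)))]

theorem shifted_stieltjes_integral_leftContinuous_and_bounded_general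
    (t T : ℝ) (htT : t ≤ T)
    (ms : StieltjesFunction ℝ) (hmsnn : ∀ u : ℝ, 0 ≤ ms u)
    (Z : ℝ → ℝ) (hZcont : ContinuousOn Z (Set.Icc t T))
    (M : ℝ) (hZbd : ∀ u ∈ Set.Icc t T, |Z u| ≤ M) :
    (∀ s ∈ Set.Icc (0:ℝ) T,
      ContinuousWithinAt
        (fun s' => ∫ u in Set.Ioc t T, Z u ∂(Measure.map (fun x => x + s') ms.measure))
        (Set.Iio s) s)
    ∧ ∀ s ∈ Set.Icc (0:ℝ) T,
        |∫ u in Set.Ioc t T, Z u ∂(Measure.map (fun x => x + s) ms.measure)| ≤ M * ms T := by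
  classical
  have hM : 0 ≤ M := (abs_nonneg _).trans (hZbd t ⟨le_rfl, htT⟩)
  have hshift : ∀ s', ∫ u in Ioc t T, Z u ∂(ms.measure.map (· + s'))
      = ∫ x, (Ioc t T).indicator Z (x + s') ∂ms.measure := fun s' => by
    rw [← integral_indicator measurableSet_Ioc, (measurableEmbedding_addRight s').integral_map]
  refine ⟨fun s _ => ?_, fun s hs => ?_⟩
  · have hmeas : StronglyMeasurable ((Ioc t T).indicator Z) := by
      rw [← piecewise_eq_indicator]
      exact ((hZcont.mono Ioc_subset_Icc_self).measurable_piecewise continuousOn_const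
        measurableSet_Ioc).stronglyMeasurable
    have hbdd : ∀ x, ‖(Ioc t T).indicator Z x‖ ≤ M := fun x => by
      by_cases hx : x ∈ Ioc t T
      · rw [indicator_of_mem hx]; exact hZbd x (Ioc_subset_Icc_self hx)
      · rw [indicator_of_notMem hx, norm_zero]; exact hM
    simp only [hshift]
    exact continuousWithinAt_Iio_integral_comp_add_right hmeas hbdd
      (fun x hx => indicator_of_notMem (fun h => hx (Ioc_subset_Icc_self h)) Z)
      (continuousWithinAt_Iio_indicator_Ioc hZcont) s
  · refine (ms.abs_setIntegral_map_add_const_Ioc_le htT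
      (fun u hu => hZbd u (Ioc_subset_Icc_self hu)) s).trans ?_
    gcongr
    linarith [hmsnn (t - s), ms.mono (show T - s ≤ T by linarith [hs.1])]

/-- regularity of `s ↦ ∫_t^T Z(u) d_u m̃(u-s)`: for a nondecreasing
right-continuous `m̃` vanishing on `(-∞,0)` whose shifts are left-continuous in `s`,
and `Z` bounded continuous on `[t,T]`, the map is left-continuous and bounded on `[0,T]`
(with bound `sup|Z| ⬝ m̃(T)`). -/
theorem shifted_stieltjes_integral_leftContinuous_and_bounded
    (t T : ℝ) (ht : 0 ≤ t) (htT : t ≤ T)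
    (ms : StieltjesFunction ℝ) (hmsnn : ∀ u : ℝ, 0 ≤ ms u)
    (hmsneg : ∀ u : ℝ, u < 0 → ms u = 0)
    (hshiftlc : ∀ u s : ℝ, ContinuousWithinAt (fun v => ms (u - v)) (Set.Iio s) s)
    (Z : ℝ → ℝ) (hZcont : ContinuousOn Z (Set.Icc t T))
    (M : ℝ) (hZbd : ∀ u ∈ Set.Icc t T, |Z u| ≤ M) :
    (∀ s ∈ Set.Icc (0:ℝ) T,
      ContinuousWithinAt
        (fun s' => ∫ u in Set.Ioc t T, Z u ∂(Measure.map (fun x => x + s') ms.measure))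
        (Set.Iio s) s)
    ∧ ∀ s ∈ Set.Icc (0:ℝ) T,
        |∫ u in Set.Ioc t T, Z u ∂(Measure.map (fun x => x + s) ms.measure)| ≤ M * ms T :=
  shifted_stieltjes_integral_leftContinuous_and_bounded_general t T htT ms hmsnn Z hZcont M hZbd
end

section
/- Let $(\tau_j)_{j\ge1}$ be a strictly increasing sequence (where finite) of random times with marks $(X_j)_{j\ge1}$, and for $j \ge 1$ let $\mathcal{H}^{\le j}_t$ be the $\sigma$-algebra generated by $(\mathbf{1}_{\{\tau_k \le s\}}\mathbf{1}_{\{X_k \in B\}})$ for $k \le j$, $s \le t$, $B$ Borel, and $\mathcal{H}^{\le j}_\infty$ its terminal $\sigma$-algebra. Then for any sub-$\sigma$-algebra $\mathcal{A} \subseteq \mathcal{G}$, any $A \in \mathcal{H}^{\le j}_\infty \vee \mathcal{A}$ and any $t \ge 0$, one has $A \cap \{\tau_j \le t\} \in \mathcal{H}^{\le j}_t \vee \mathcal{A}$; consequently $E[\mathbf{1}_{\{\tau_j \le t\}} Y \mid \mathcal{H}^{\le j}_t \vee \mathcal{A}] = E[\mathbf{1}_{\{\tau_j \le t\}} Y \mid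 \mathcal{H}^{\le j}_\infty \vee \mathcal{A}]$ a.s. for every integrable $Y$. -/
/-!
On `T = {τ_j ≤ t}` every reporting time `τ_k`, `k ≤ j`, is at most `t`, so
`{τ_k ≤ s, X_k ∈ B} ∩ T = {τ_k ≤ s ⊓ t, X_k ∈ B} ∩ T`: the generators of `ℋ^{≤j}_∞` already
belong, after intersection with `T`, to `ℋ^{≤j}_t`. Hence `ℋ^{≤j}_∞ ∨ 𝓐` lies in the trace
σ-algebra `{A | A ∩ T ∈ ℋ^{≤j}_t ∨ 𝓐}`. For the conditional expectations,
`E[1_T Y | ℋ^{≤j}_∞ ∨ 𝓐] = 1_T E[Y | ℋ^{≤j}_∞ ∨ 𝓐]` is then `ℋ^{≤j}_t ∨ 𝓐`-measurable, and the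
tower property finishes.
-/

open MeasureTheory
open scoped ENNReal

namespace MeasurableSpace

variable {Ω : Type*}

@[reducible]
def traceOn (m : MeasurableSpace Ω) (T : Set Ω) (hT : MeasurableSet[m] T) :
    MeasurableSpace Ω where
  MeasurableSet' A := MeasurableSet[m] (A ∩ T)
  measurableSet_empty := by simp
  measurableSet_compl A hA := by
    have hcompl : Aᶜ ∩ T = T \ (A ∩ T) := by ext; simp [and_comm]
    rw [hcompl]
    exact hT.diff hA
  measurableSet_iUnion f hf := by
    rw [Set.iUnion_inter]
    exact MeasurableSet.iUnion hf

variable {m : MeasurableSpace Ω} {T : Set Ω} {hT : MeasurableSet[m] T}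

theorem measurableSet_traceOn_iff {A : Set Ω} :
    MeasurableSet[m.traceOn T hT] A ↔ MeasurableSet[m] (A ∩ T) := Iff.rfl

theorem le_traceOn : m ≤ m.traceOn T hT := fun _ hA => hA.inter hT

end MeasurableSpace

open MeasurableSpace

theorem Measurable.indicator_of_traceOn {Ω β : Type*} [Zero β] [MeasurableSpace β]
    {m : MeasurableSpace Ω} {T : Set Ω} {hT : MeasurableSet[m] T} {f : Ω → β}
    (hf : Measurable[m.traceOn T hT] f) : Measurable[m] (T.indicator f) := by
  intro B hB
  rw [Set.indicator_preimage, Set.ite]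
  have hzero : Measurable[m] (0 : Ω → β) := measurable_const
  exact (measurableSet_traceOn_iff.mp (hf hB)).union ((hzero hB).diff hT)

theorem condExp_indicator_ae_eq_of_le_traceOn {Ω : Type*} {m₁ m₂ m0 : MeasurableSpace Ω}
    {μ : Measure Ω} {T : Set Ω} (hT : MeasurableSet[m₁] T) (h₁₂ : m₁ ≤ m₂)
    (h₂ : m₂ ≤ m₁.traceOn T hT) (hm₂ : m₂ ≤ m0) [IsFiniteMeasure μ] {Y : Ω → ℝ}
    (hY : Integrable Y μ) :
    μ[T.indicator Y | m₁] =ᵐ[μ] μ[T.indicator Y | m₂] := by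
  have hm₁ : m₁ ≤ m0 := h₁₂.trans hm₂
  have hind : μ[T.indicator Y | m₂] =ᵐ[μ] T.indicator (μ[Y | m₂]) :=
    condExp_indicator hY (h₁₂ _ hT)
  have hmeas : StronglyMeasurable[m₁] (T.indicator (μ[Y | m₂])) :=
    (stronglyMeasurable_condExp.measurable.mono h₂ le_rfl).indicator_of_traceOn.stronglyMeasurable
  calc μ[T.indicator Y | m₁]
      =ᵐ[μ] μ[μ[T.indicator Y | m₂] | m₁] := (condExp_condExp_of_le h₁₂ hm₂).symm
    _ =ᵐ[μ] μ[T.indicator (μ[Y | m₂]) | m₁] := condExp_congr_ae hind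
    _ = T.indicator (μ[Y | m₂]) := condExp_of_stronglyMeasurable hm₁ hmeas
      (integrable_condExp.indicator (hm₁ _ hT))
    _ =ᵐ[μ] μ[T.indicator Y | m₂] := hind.symm

section MarkedPointProcess

variable {Ω : Type*} (τ : ℕ → Ω → ℝ≥0∞) (X : ℕ → Ω → ℝ) (j : ℕ)

/-- `ℋ^{≤j}_∞` of the paper. -/
@[reducible]
noncomputable def markedHistory : MeasurableSpace Ω :=
  ⨆ (k : ℕ) (_ : k ≤ j) (s : ℝ≥0∞) (B : Set ℝ) (_ : MeasurableSet B),
    MeasurableSpace.comap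
      (Set.indicator {ω' | τ k ω' ≤ s ∧ X k ω' ∈ B} fun _ => (1 : ℝ)) inferInstance

/-- `ℋ^{≤j}_t` of the paper. -/
@[reducible]
noncomputable def markedHistoryUpTo (t : ℝ≥0∞) : MeasurableSpace Ω :=
  ⨆ (k : ℕ) (_ : k ≤ j) (s : ℝ≥0∞) (_ : s ≤ t) (B : Set ℝ) (_ : MeasurableSet B),
    MeasurableSpace.comap
      (Set.indicator {ω' | τ k ω' ≤ s ∧ X k ω' ∈ B} fun _ => (1 : ℝ)) inferInstance

variable {τ X j}

theorem measurableSet_markedHistoryUpTo {t s : ℝ≥0∞} {k : ℕ} {B : Set ℝ} (hk : k ≤ j)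
    (hs : s ≤ t) (hB : MeasurableSet B) :
    MeasurableSet[markedHistoryUpTo τ X j t] {ω | τ k ω ≤ s ∧ X k ω ∈ B} := by
  have hle : MeasurableSpace.comap
      (Set.indicator {ω | τ k ω ≤ s ∧ X k ω ∈ B} fun _ => (1 : ℝ)) inferInstance
      ≤ markedHistoryUpTo τ X j t :=
    le_iSup₂_of_le k hk <| le_iSup₂_of_le s hs <| le_iSup₂_of_le (f := fun B _ => _) B hB le_rfl
  exact hle _ ((measurable_indicator_const_iff (1 : ℝ)).mp (comap_measurable _))

theorem measurableSet_markedHistoryUpTo_jump_le (t : ℝ≥0∞) :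
    MeasurableSet[markedHistoryUpTo τ X j t] {ω | τ j ω ≤ t} := by
  simpa using measurableSet_markedHistoryUpTo (τ := τ) (X := X) le_rfl le_rfl MeasurableSet.univ

theorem markedHistoryUpTo_le_markedHistory (t : ℝ≥0∞) :
    markedHistoryUpTo τ X j t ≤ markedHistory τ X j :=
  iSup₂_mono fun _ _ => iSup_mono fun _ => iSup_le fun _ => le_rfl

theorem markedHistory_le {m0 : MeasurableSpace Ω} (hτ : ∀ k, Measurable (τ k))
    (hX : ∀ k, Measurable (X k)) : markedHistory τ X j ≤ m0 :=
  iSup₂_le fun k _ => iSup_le fun _ => iSup₂_le fun _ hB => measurable_iff_comap_le.mp <|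
    measurable_const.indicator (measurableSet_le (hτ k) measurable_const |>.inter (hX k hB))

variable (𝓐 : MeasurableSpace Ω) {t : ℝ≥0∞}

theorem markedHistory_sup_le_traceOn (hτj : ∀ k ≤ j, ∀ ω, τ k ω ≤ τ j ω)
    (hT : MeasurableSet[markedHistoryUpTo τ X j t ⊔ 𝓐] {ω | τ j ω ≤ t}) :
    markedHistory τ X j ⊔ 𝓐 ≤ (markedHistoryUpTo τ X j t ⊔ 𝓐).traceOn _ hT := by
  refine sup_le (iSup₂_le fun k hk => iSup_le fun s => iSup₂_le fun B hB => ?_)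
    (le_sup_right.trans le_traceOn)
  refine measurable_iff_comap_le.mp (measurable_const.indicator ?_)
  rw [measurableSet_traceOn_iff]
  have htrunc : {ω | τ k ω ≤ s ∧ X k ω ∈ B} ∩ {ω | τ j ω ≤ t}
      = {ω | τ k ω ≤ s ⊓ t ∧ X k ω ∈ B} ∩ {ω | τ j ω ≤ t} := by
    ext ω
    simp only [Set.mem_inter_iff, Set.mem_ofPred_eq, le_inf_iff]
    exact ⟨fun ⟨⟨hs, hB⟩, ht⟩ => ⟨⟨⟨hs, (hτj k hk ω).trans ht⟩, hB⟩, ht⟩,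
      fun ⟨⟨⟨hs, _⟩, hB⟩, ht⟩ => ⟨⟨hs, hB⟩, ht⟩⟩
  rw [htrunc]
  exact (le_sup_left (b := 𝓐) _ (measurableSet_markedHistoryUpTo hk inf_le_right hB)).inter hT

end MarkedPointProcess

theorem partial_information_eq_full_after_jump_general
    {Ω : Type*} {m0 : MeasurableSpace Ω} (P : Measure Ω) [IsProbabilityMeasure P]
    (τ : ℕ → Ω → ℝ≥0∞) (X : ℕ → Ω → ℝ)
    (hτ : ∀ k, Measurable (τ k)) (hX : ∀ k, Measurable (X k))
    (hmono : ∀ k ω, τ k ω ≤ τ (k + 1) ω)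
    (𝓐 : MeasurableSpace Ω) (h𝓐 : 𝓐 ≤ m0)
    (j : ℕ) (t : ℝ≥0∞) :
    (∀ A : Set Ω,
      MeasurableSet[(⨆ (k : ℕ) (_ : k ≤ j) (s : ℝ≥0∞) (B : Set ℝ) (_ : MeasurableSet B),
          MeasurableSpace.comap
            (Set.indicator {ω' | τ k ω' ≤ s ∧ X k ω' ∈ B} fun _ => (1 : ℝ)) inferInstance) ⊔ 𝓐] A →
      MeasurableSet[(⨆ (k : ℕ) (_ : k ≤ j) (s : ℝ≥0∞) (_ : s ≤ t) (B : Set ℝ)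
          (_ : MeasurableSet B),
          MeasurableSpace.comap
            (Set.indicator {ω' | τ k ω' ≤ s ∧ X k ω' ∈ B} fun _ => (1 : ℝ)) inferInstance) ⊔ 𝓐]
        (A ∩ {ω | τ j ω ≤ t}))
    ∧ ∀ Y : Ω → ℝ, Integrable Y P →
      (P[(fun ω => Set.indicator {ω' | τ j ω' ≤ t} (fun _ => (1 : ℝ)) ω * Y ω) |
          (⨆ (k : ℕ) (_ : k ≤ j) (s : ℝ≥0∞) (_ : s ≤ t) (B : Set ℝ) (_ : MeasurableSet B),
            MeasurableSpace.comap
              (Set.indicator {ω' | τ k ω' ≤ s ∧ X k ω' ∈ B} fun _ => (1 : ℝ)) inferInstance) ⊔ 𝓐])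
        =ᵐ[P]
      (P[(fun ω => Set.indicator {ω' | τ j ω' ≤ t} (fun _ => (1 : ℝ)) ω * Y ω) |
          (⨆ (k : ℕ) (_ : k ≤ j) (s : ℝ≥0∞) (B : Set ℝ) (_ : MeasurableSet B),
            MeasurableSpace.comap
              (Set.indicator {ω' | τ k ω' ≤ s ∧ X k ω' ∈ B} fun _ => (1 : ℝ)) inferInstance) ⊔ 𝓐]) := by
  set T : Set Ω := {ω | τ j ω ≤ t}
  change (∀ A, MeasurableSet[markedHistory τ X j ⊔ 𝓐] A →
        MeasurableSet[markedHistoryUpTo τ X j t ⊔ 𝓐] (A ∩ T))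
    ∧ ∀ Y : Ω → ℝ, Integrable Y P →
      P[fun ω => T.indicator (fun _ => (1 : ℝ)) ω * Y ω | markedHistoryUpTo τ X j t ⊔ 𝓐]
        =ᵐ[P] P[fun ω => T.indicator (fun _ => (1 : ℝ)) ω * Y ω | markedHistory τ X j ⊔ 𝓐]
  have hτj : ∀ k ≤ j, ∀ ω, τ k ω ≤ τ j ω := fun k hk ω =>
    monotone_nat_of_le_succ (hmono · ω) hk
  have hT : MeasurableSet[markedHistoryUpTo τ X j t ⊔ 𝓐] T :=
    le_sup_left (b := 𝓐) _ (measurableSet_markedHistoryUpTo_jump_le t)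
  have htrace := markedHistory_sup_le_traceOn 𝓐 hτj hT
  refine ⟨fun A hA => htrace A hA, fun Y hY => ?_⟩
  have hindicator : (fun ω => T.indicator (fun _ => (1 : ℝ)) ω * Y ω) = T.indicator Y := by
    funext ω
    rw [← Set.indicator_mul_left, funext fun ω => one_mul (Y ω)]
  rw [hindicator]
  exact condExp_indicator_ae_eq_of_le_traceOn hT
    (sup_le_sup_right (markedHistoryUpTo_le_markedHistory t) 𝓐) htrace
    (sup_le (markedHistory_le hτ hX) h𝓐) hY

/-- Lemma 3.8: for a simple marked point process (0-based indexing: `τ k`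
is the `(k+1)`-th reporting time), any `A ∈ ℋ^{≤j}_∞ ∨ 𝓐` satisfies
`A ∩ {τ_j ≤ t} ∈ ℋ^{≤j}_t ∨ 𝓐`; consequently
`E[1_{τ_j ≤ t} Y | ℋ^{≤j}_t ∨ 𝓐] = E[1_{τ_j ≤ t} Y | ℋ^{≤j}_∞ ∨ 𝓐]` a.s. -/
theorem partial_information_eq_full_after_jump
    {Ω : Type*} {m0 : MeasurableSpace Ω} (P : Measure Ω) [IsProbabilityMeasure P]
    (τ : ℕ → Ω → ℝ≥0∞) (X : ℕ → Ω → ℝ)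
    (hτ : ∀ k, Measurable (τ k)) (hX : ∀ k, Measurable (X k))
    (hτpos : ∀ k ω, 0 < τ k ω)
    (hmono : ∀ k ω, τ k ω ≤ τ (k + 1) ω)
    (hstrict : ∀ k ω, τ k ω < ⊤ → τ k ω < τ (k + 1) ω)
    (𝓐 : MeasurableSpace Ω) (h𝓐 : 𝓐 ≤ m0)
    (j : ℕ) (t : ℝ≥0∞) :
    (∀ A : Set Ω,
      MeasurableSet[(⨆ (k : ℕ) (_ : k ≤ j) (s : ℝ≥0∞) (B : Set ℝ) (_ : MeasurableSet B),
          MeasurableSpace.comap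
            (Set.indicator {ω' | τ k ω' ≤ s ∧ X k ω' ∈ B} fun _ => (1 : ℝ)) inferInstance) ⊔ 𝓐] A →
      MeasurableSet[(⨆ (k : ℕ) (_ : k ≤ j) (s : ℝ≥0∞) (_ : s ≤ t) (B : Set ℝ)
          (_ : MeasurableSet B),
          MeasurableSpace.comap
            (Set.indicator {ω' | τ k ω' ≤ s ∧ X k ω' ∈ B} fun _ => (1 : ℝ)) inferInstance) ⊔ 𝓐]
        (A ∩ {ω | τ j ω ≤ t}))
    ∧ ∀ Y : Ω → ℝ, Integrable Y P →
      (P[(fun ω => Set.indicator {ω' | τ j ω' ≤ t} (fun _ => (1 : ℝ)) ω * Y ω) |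
          (⨆ (k : ℕ) (_ : k ≤ j) (s : ℝ≥0∞) (_ : s ≤ t) (B : Set ℝ) (_ : MeasurableSet B),
            MeasurableSpace.comap
              (Set.indicator {ω' | τ k ω' ≤ s ∧ X k ω' ∈ B} fun _ => (1 : ℝ)) inferInstance) ⊔ 𝓐])
        =ᵐ[P]
      (P[(fun ω => Set.indicator {ω' | τ j ω' ≤ t} (fun _ => (1 : ℝ)) ω * Y ω) |
          (⨆ (k : ℕ) (_ : k ≤ j) (s : ℝ≥0∞) (B : Set ℝ) (_ : MeasurableSet B),
            MeasurableSpace.comap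
              (Set.indicator {ω' | τ k ω' ≤ s ∧ X k ω' ∈ B} fun _ => (1 : ℝ)) inferInstance) ⊔ 𝓐]) :=
  partial_information_eq_full_after_jump_general P τ X hτ hX hmono 𝓐 h𝓐 j t
end
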